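/- The abelianization of the integer Heisenberg group at level 2 is isomorphic to ℤ × ℤ × ZMod 2. -/

import Mathlib

def HeisMul (x y : ℤ × ℤ × ℤ) : ℤ × ℤ × ℤ :=
  (x.1 + y.1, x.2.1 + y.2.1, x.2.2 + y.2.2 + x.1 * y.2.1 - x.2.1 * y.1)

def HeisInv (x : ℤ × ℤ × ℤ) : ℤ × ℤ × ℤ := (-x.1, -x.2.1, -x.2.2)

/-- The integer Heisenberg group at level 2. -/
def Heis : Type := ℤ × ℤ × ℤ

instance : Group Heis where
  mul := HeisMul
  one := ((0 : ℤ), (0 : ℤ), (0 : ℤ))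
  inv := HeisInv
  mul_assoc a b c := by
    show HeisMul (HeisMul a b) c = HeisMul a (HeisMul b c)
    simp only [HeisMul, Prod.mk.injEq]
    refine ⟨by ring, by ring, by ring⟩
  one_mul a := by
    show HeisMul ((0:ℤ),(0:ℤ),(0:ℤ)) a = a
    obtain ⟨a1, a2, a3⟩ := (a : ℤ × ℤ × ℤ)
    simp [HeisMul]
  mul_one a := by
    show HeisMul a ((0:ℤ),(0:ℤ),(0:ℤ)) = a
    obtain ⟨a1, a2, a3⟩ := (a : ℤ × ℤ × ℤ)
    simp [HeisMul]
  inv_mul_cancel a := by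
    show HeisMul (HeisInv a) a = ((0:ℤ),(0:ℤ),(0:ℤ))
    obtain ⟨a1, a2, a3⟩ := (a : ℤ × ℤ × ℤ)
    simp only [HeisMul, HeisInv, Prod.mk.injEq]
    refine ⟨by ring, by ring, by ring⟩

/-!
The map `(a, b, z) ↦ (a, b, z + a b mod 2)` is a homomorphism onto the abelian group
`ℤ × ℤ × ℤ/2`. Its kernel consists of the central elements `(0, 0, 2k)`, and each of them is
the commutator of `(k, 0, 0)` and `(0, 1, 0)`, so the kernel is exactly the commutator subgroup.
-/

namespace Heis

open scoped commutatorElement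

def mk (a b z : ℤ) : Heis := show ℤ × ℤ × ℤ from (a, b, z)

theorem exists_eq_mk (x : Heis) : ∃ a b z, x = mk a b z := ⟨_, _, _, rfl⟩

theorem mk_mul_mk (a b z a' b' z' : ℤ) :
    mk a b z * mk a' b' z' = mk (a + a') (b + b') (z + z' + a * b' - b * a') := rfl

theorem inv_mk (a b z : ℤ) : (mk a b z)⁻¹ = mk (-a) (-b) (-z) := rfl

theorem commutator_mk_mk (k : ℤ) : ⁅mk k 0 0, mk 0 1 0⁆ = mk 0 0 (2 * k) := by
  simp only [commutatorElement_def, mk_mul_mk, inv_mk]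
  congr 1 <;> ring

/-- Modulo 2 the cocycle `a b' - b a'` agrees with `a b' + a' b`, the cross term of
`(a + a') (b + b')`, so adding `a b` to the central coordinate makes it additive. -/
def abelianizationHom : Heis →* Multiplicative (ℤ × ℤ × ZMod 2) :=
  MonoidHom.mk'
    (fun ((a, b, z) : ℤ × ℤ × ℤ) ↦ Multiplicative.ofAdd (a, b, ((z + a * b : ℤ) : ZMod 2)))
    (by
      intro x y
      obtain ⟨a, b, z, rfl⟩ := exists_eq_mk x
      obtain ⟨a', b', z', rfl⟩ := exists_eq_mk y
      rw [mk_mul_mk]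
      simp only [mk, ← ofAdd_add, Prod.mk_add_mk, ← Int.cast_add]
      congr 3
      exact (ZMod.intCast_eq_intCast_iff_dvd_sub _ _ 2).2 ⟨-(a * b'), by ring⟩)

theorem abelianizationHom_mk (a b z : ℤ) :
    abelianizationHom (mk a b z) = Multiplicative.ofAdd (a, b, ((z + a * b : ℤ) : ZMod 2)) := rfl

theorem abelianizationHom_surjective : Function.Surjective abelianizationHom := by
  rintro ⟨a, b, c⟩
  obtain ⟨z, rfl⟩ := ZMod.intCast_surjective c
  exact ⟨mk a b (z - a * b), by rw [abelianizationHom_mk, sub_add_cancel]; rfl⟩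

theorem ker_abelianizationHom : abelianizationHom.ker = commutator Heis := by
  refine le_antisymm (fun x hx ↦ ?_) (Abelianization.commutator_subset_ker _)
  obtain ⟨a, b, z, rfl⟩ := exists_eq_mk x
  rw [MonoidHom.mem_ker, abelianizationHom_mk, ofAdd_eq_one] at hx
  simp only [Prod.mk_eq_zero] at hx
  obtain ⟨rfl, rfl, hz⟩ := hx
  rw [mul_zero, add_zero, ZMod.intCast_eq_zero_iff_even, even_iff_two_dvd] at hz
  obtain ⟨k, rfl⟩ := hz
  rw [← commutator_mk_mk, commutator_def]
  exact Subgroup.commutator_mem_commutator (Subgroup.mem_top _) (Subgroup.mem_top _)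

end Heis

/-- The abelianization of the integer Heisenberg group at level 2 is
isomorphic to ℤ × ℤ × (ℤ/2ℤ). -/
theorem heis_abelianization :
    Nonempty (Abelianization Heis ≃* Multiplicative (ℤ × ℤ × ZMod 2)) :=
  ⟨(QuotientGroup.quotientMulEquivOfEq Heis.ker_abelianizationHom.symm).trans
    (QuotientGroup.quotientKerEquivOfSurjective _ Heis.abelianizationHom_surjective)⟩
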